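/- Let (G,w) be a Hausdorff totally bounded abelian topological group which is the topological direct product (G,w) = (A,w) × (B,w) of two of its subgroups. Then (G,w) ∈ 𝓑 if and only if both (A,w) ∈ 𝓑 and (B,w) ∈ 𝓑. -/

import Mathlib

open Filter Topology Pointwise

noncomputable section

/-- The circle group `𝕋 = ℝ/ℤ`. -/
abbrev Circle1 : Type := AddCircle (1 : ℝ)

variable {G : Type*}

/-- The Bohr topology associated to a group topology `t`: the initial topology induced by
all `t`-continuous homomorphisms into the circle. -/
def bohr [AddCommGroup G] (t : TopologicalSpace G) : TopologicalSpace G :=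
  ⨅ (χ : G →+ Circle1) (_ : @Continuous G Circle1 t _ ⇑χ),
    TopologicalSpace.induced ⇑χ inferInstance

/-- A group topology is totally bounded if every neighborhood of `0` has finitely many
translates covering the group. -/
def TotallyBoundedGroup [AddCommGroup G] (w : TopologicalSpace G) : Prop :=
  ∀ U ∈ @nhds G w 0, ∃ F : Finset G, ∀ g : G, ∃ f ∈ F, g - f ∈ U

/-- `(G,w)` is a Bohr group (a member of the class `𝓑`) if `w` is the Bohr topology of some
locally compact Hausdorff group topology on `G`. -/
def IsBohrGroup [AddCommGroup G] (w : TopologicalSpace G) : Prop :=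
  ∃ τ : TopologicalSpace G, @IsTopologicalAddGroup G τ _ ∧ @LocallyCompactSpace G τ ∧
    @T2Space G τ ∧ bohr τ = w

/-- The group of `t`-continuous characters of `G`, as a subgroup of `G →+ 𝕋`. -/
def charSubgroup [AddCommGroup G] (t : TopologicalSpace G) : AddSubgroup (G →+ Circle1) where
  carrier := {χ : G →+ Circle1 | @Continuous G Circle1 t _ ⇑χ}
  zero_mem' := by
    show @Continuous G Circle1 t _ ⇑(0 : G →+ Circle1)
    simp only [AddMonoidHom.zero_apply, show ⇑(0 : G →+ Circle1) = fun _ => (0:Circle1) from rfl]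
    exact @continuous_const G Circle1 t _ 0
  add_mem' := by
    intro χ φ hχ hφ
    show @Continuous G Circle1 t _ ⇑(χ + φ)
    simp only [show ⇑(χ + φ) = fun x => χ x + φ x from rfl]
    exact hχ.add hφ
  neg_mem' := by
    intro χ hχ
    show @Continuous G Circle1 t _ ⇑(-χ)
    simp only [show ⇑(-χ) = fun x => -(χ x) from rfl]
    exact hχ.neg

/-- The compact-open topology on the character group of `(G,t)`. -/
def coTop [AddCommGroup G] (t : TopologicalSpace G) :
    TopologicalSpace (charSubgroup (G := G) t) :=
  TopologicalSpace.generateFrom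
    {S | ∃ (K : Set G) (U : Set Circle1), @IsCompact G t K ∧ IsOpen U ∧
      S = {χ : charSubgroup (G := G) t | ∀ x ∈ K, (χ : G →+ Circle1) x ∈ U}}

/-- The topology of pointwise convergence on the character group of `(G,t)`. -/
def ptTop [AddCommGroup G] (t : TopologicalSpace G) :
    TopologicalSpace (charSubgroup (G := G) t) :=
  TopologicalSpace.induced (fun (χ : charSubgroup (G := G) t) (g : G) => (χ : G →+ Circle1) g)
    Pi.topologicalSpace

/-- Topological isomorphism between two groups carrying explicitly given topologies. -/
def IsTopAddIso {A B : Type*} [AddCommGroup A] [AddCommGroup B]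
    (tA : TopologicalSpace A) (tB : TopologicalSpace B) : Prop :=
  ∃ e : A ≃+ B, @Continuous A B tA tB ⇑e ∧ @Continuous B A tB tA ⇑e.symm

/-- `(G,w)` is the topological direct product of its subgroups `A` and `B`: the natural
addition map `A × B → G` is a group isomorphism and a homeomorphism (bijective, continuous
and open) for the product of the subspace topologies. -/
def IsTopDirectProduct {G : Type*} [AddCommGroup G] (w : TopologicalSpace G)
    (A B : AddSubgroup G) : Prop :=
  Function.Bijective (fun p : A × B => (p.1 : G) + (p.2 : G)) ∧
  @Continuous (A × B) G
    (@instTopologicalSpaceProd A B (TopologicalSpace.induced (Subtype.val : A → G) w)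
      (TopologicalSpace.induced (Subtype.val : B → G) w)) w
    (fun p : A × B => (p.1 : G) + (p.2 : G)) ∧
  @IsOpenMap (A × B) G
    (@instTopologicalSpaceProd A B (TopologicalSpace.induced (Subtype.val : A → G) w)
      (TopologicalSpace.induced (Subtype.val : B → G) w)) w
    (fun p : A × B => (p.1 : G) + (p.2 : G))

/-! The Bohr topology is functorial for continuous homomorphisms and commutes with products and
with transport along group isomorphisms, so `𝓑` is closed under products and topological
isomorphisms; this gives one direction. For the other, let `τ` be a locally compact group topology
on `H × K` with `bohr τ = tH × tK`. Its quotient topology `σ` along the first projection is again a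
locally compact group topology, and `bohr σ = tH` because `inl ∘ fst`, being continuous for
`bohr τ`, is continuous for the finer `τ`. As `σ` is finer than `bohr σ = tH`, it is Hausdorff. -/

namespace AddMonoidHom

variable {H K : Type*} [AddGroup H] [AddGroup K] [TopologicalSpace H]

theorem isOpenQuotientMap_coinduced [ContinuousAdd H] (f : H →+ K) (hf : Function.Surjective f) :
    @IsOpenQuotientMap H K _ (.coinduced f ‹_›) f :=
  let _ : TopologicalSpace K := .coinduced f ‹_›
  isOpenQuotientMap_of_isQuotientMap ⟨⟨rfl⟩, hf⟩

theorem isTopologicalAddGroup_coinduced [IsTopologicalAddGroup H] (f : H →+ K)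
    (hf : Function.Surjective f) :
    @IsTopologicalAddGroup K (.coinduced f ‹_›) _ :=
  let _ : TopologicalSpace K := .coinduced f ‹_›
  have hq : IsOpenQuotientMap f := f.isOpenQuotientMap_coinduced hf
  { continuous_add := by
      rw [← (hq.prodMap hq).continuous_comp_iff]
      simpa only [Function.comp_def, Prod.map, map_add] using hq.continuous.comp continuous_add
    continuous_neg := by
      rw [← hq.continuous_comp_iff]
      simpa only [Function.comp_def, map_neg] using hq.continuous.comp continuous_neg }

theorem locallyCompactSpace_coinduced [ContinuousAdd H] [LocallyCompactSpace H]
    (f : H →+ K) (hf : Function.Surjective f) : @LocallyCompactSpace K (.coinduced f ‹_›) :=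
  let _ : TopologicalSpace K := .coinduced f ‹_›
  (f.isOpenQuotientMap_coinduced hf).locallyCompactSpace

end AddMonoidHom

section Bohr

variable {H K : Type*} [AddCommGroup H] [AddCommGroup K]

theorem continuous_bohr_of_continuous {t : TopologicalSpace H} {χ : H →+ Circle1}
    (hχ : Continuous[t, _] χ) : Continuous[bohr t, _] χ :=
  continuous_iff_le_induced.2 (iInf₂_le χ hχ)

theorem le_bohr (t : TopologicalSpace H) : t ≤ bohr t :=
  le_iInf₂ fun _ hχ => continuous_iff_le_induced.1 hχ

theorem continuous_bohr_iff {t : TopologicalSpace H} {χ : H →+ Circle1} :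
    Continuous[bohr t, _] χ ↔ Continuous[t, _] χ :=
  ⟨continuous_le_dom (le_bohr t), continuous_bohr_of_continuous⟩

theorem bohr_bohr (t : TopologicalSpace H) : bohr (bohr t) = bohr t := by
  simp only [bohr, continuous_bohr_iff]

theorem AddMonoidHom.continuous_bohr {tH : TopologicalSpace H} {tK : TopologicalSpace K}
    (f : H →+ K) (hf : Continuous[tH, tK] f) : Continuous[bohr tH, bohr tK] f :=
  continuous_iInf_rng.2 fun χ => continuous_iInf_rng.2 fun hχ =>
    continuous_induced_rng.2 (continuous_bohr_of_continuous (χ := χ.comp f) (hχ.comp hf))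

theorem bohr_induced (e : H ≃+ K) (t : TopologicalSpace K) :
    bohr (t.induced e) = (bohr t).induced e := by
  have he : Continuous[bohr (t.induced e), bohr t] e :=
    e.toAddMonoidHom.continuous_bohr continuous_induced_dom
  have hes : Continuous[bohr t, bohr (t.induced e)] e.symm :=
    e.symm.toAddMonoidHom.continuous_bohr
      (continuous_induced_rng.2 (by simpa [Function.comp_def] using continuous_id'))
  let _ : TopologicalSpace H := bohr (t.induced e)
  let _ : TopologicalSpace K := bohr t
  exact (Homeomorph.isInducing ⟨e.toEquiv, he, hes⟩).eq_induced

theorem bohr_prod (tH : TopologicalSpace H) (tK : TopologicalSpace K) :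
    bohr (@instTopologicalSpaceProd H K tH tK) =
      @instTopologicalSpaceProd H K (bohr tH) (bohr tK) := by
  let _ := tH
  let _ := tK
  refine le_antisymm (le_inf ?_ ?_) (le_iInf₂ fun χ hχ => continuous_iff_le_induced.1 ?_)
  · exact continuous_iff_le_induced.1 ((AddMonoidHom.fst H K).continuous_bohr continuous_fst)
  · exact continuous_iff_le_induced.1 ((AddMonoidHom.snd H K).continuous_bohr continuous_snd)
  · have hH : Continuous[bohr tH, _] (χ.comp (.inl H K)) :=
      continuous_bohr_of_continuous (hχ.comp (continuous_id.prodMk continuous_const))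
    have hK : Continuous[bohr tK, _] (χ.comp (.inr H K)) :=
      continuous_bohr_of_continuous (hχ.comp (continuous_const.prodMk continuous_id))
    rw [← χ.comp_id, ← AddMonoidHom.coprod_inl_inr, AddMonoidHom.comp_coprod]
    let _ := bohr tH
    let _ := bohr tK
    exact (hH.comp continuous_fst).add (hK.comp continuous_snd)

namespace IsBohrGroup

theorem induced (e : H ≃+ K) {t : TopologicalSpace K} (h : IsBohrGroup t) :
    IsBohrGroup (t.induced e) := by
  obtain ⟨τ, _, _, _, rfl⟩ := h
  let _ := τ
  let _ : TopologicalSpace H := τ.induced e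
  let f : H ≃ₜ K := e.toEquiv.toHomeomorphOfIsInducing (.induced e)
  exact ⟨τ.induced e, topologicalAddGroup_induced e, f.isOpenEmbedding.locallyCompactSpace,
    f.isEmbedding.t2Space, bohr_induced e τ⟩

theorem prod {tH : TopologicalSpace H} {tK : TopologicalSpace K} (hH : IsBohrGroup tH)
    (hK : IsBohrGroup tK) : IsBohrGroup (@instTopologicalSpaceProd H K tH tK) := by
  obtain ⟨τH, _, _, _, rfl⟩ := hH
  obtain ⟨τK, _, _, _, rfl⟩ := hK
  let _ := τH
  let _ := τK
  exact ⟨instTopologicalSpaceProd, inferInstance, inferInstance, inferInstance, bohr_prod τH τK⟩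

theorem of_prod_left {tH : TopologicalSpace H} {tK : TopologicalSpace K} (hH : @T2Space H tH)
    (h : IsBohrGroup (@instTopologicalSpaceProd H K tH tK)) : IsBohrGroup tH := by
  obtain ⟨τ, _, _, -, hτ⟩ := h
  have hσ : bohr (τ.coinduced Prod.fst) = tH := by
    let P : TopologicalSpace (H × K) := instTopologicalSpaceProd
    replace hτ : bohr τ = P := hτ
    have hinl : tH = P.induced (AddMonoidHom.inl H K) := (isInducing_prodMkLeft 0).eq_induced
    have hfst : Continuous[P, tH] (AddMonoidHom.fst H K) := continuous_fst
    refine le_antisymm ?_ ?_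
    · have h := (AddMonoidHom.inl H K).continuous_bohr (continuous_coinduced_dom.2
        (continuous_le_dom (le_bohr τ) (hτ ▸ (continuous_iff_le_induced.2 hinl.le).comp hfst)))
      rw [bohr_bohr, hτ] at h
      exact hinl ▸ continuous_iff_le_induced.1 h
    · have hq : Continuous[τ, τ.coinduced Prod.fst] (AddMonoidHom.fst H K) :=
        continuous_coinduced_rng
      have h := (AddMonoidHom.fst H K).continuous_bohr hq
      rw [hτ] at h
      calc tH = P.induced (AddMonoidHom.inl H K) := hinl
        _ ≤ ((bohr _).induced (AddMonoidHom.fst H K)).induced (AddMonoidHom.inl H K) :=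
          induced_mono (continuous_iff_le_induced.1 h)
        _ = bohr _ := by rw [induced_compose]; exact induced_id (t := bohr _)
  exact ⟨τ.coinduced Prod.fst,
    (AddMonoidHom.fst H K).isTopologicalAddGroup_coinduced Prod.fst_surjective,
    (AddMonoidHom.fst H K).locallyCompactSpace_coinduced Prod.fst_surjective,
    t2Space_antitone (hσ ▸ le_bohr _) hH, hσ⟩

end IsBohrGroup

theorem isBohrGroup_induced_addEquiv_iff (e : H ≃+ K) {t : TopologicalSpace K} :
    IsBohrGroup (t.induced e) ↔ IsBohrGroup t := by
  refine ⟨fun h => ?_, .induced e⟩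
  have h' := h.induced e.symm
  rwa [induced_compose, e.self_comp_symm, induced_id (t := t)] at h'

theorem induced_prodComm (tH : TopologicalSpace H) (tK : TopologicalSpace K) :
    (@instTopologicalSpaceProd H K tH tK).induced (AddEquiv.prodComm (M := K) (N := H)) =
      @instTopologicalSpaceProd K H tK tH :=
  let _ := tH
  let _ := tK
  (Homeomorph.prodComm K H).isInducing.eq_induced.symm

theorem isBohrGroup_prod_iff {tH : TopologicalSpace H} {tK : TopologicalSpace K}
    (hH : @T2Space H tH) (hK : @T2Space K tK) :
    IsBohrGroup (@instTopologicalSpaceProd H K tH tK) ↔ IsBohrGroup tH ∧ IsBohrGroup tK := by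
  refine ⟨fun h => ⟨h.of_prod_left hH, ?_⟩, fun h => h.1.prod h.2⟩
  have h' := h.induced (AddEquiv.prodComm (M := K) (N := H))
  rw [induced_prodComm] at h'
  exact h'.of_prod_left hK

end Bohr

theorem IsTopDirectProduct.exists_addEquiv_induced_eq [AddCommGroup G] {w : TopologicalSpace G}
    {A B : AddSubgroup G} (h : IsTopDirectProduct w A B) :
    ∃ e : A × B ≃+ G, w.induced e =
      @instTopologicalSpaceProd A B (w.induced Subtype.val) (w.induced Subtype.val) := by
  obtain ⟨hbij, hcont, hopen⟩ := h
  let _ := w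
  let e := AddEquiv.ofBijective (A.subtype.coprod B.subtype) hbij
  exact ⟨e, (e.toEquiv.toHomeomorphOfContinuousOpen hcont hopen).isInducing.eq_induced.symm⟩

theorem stmt7_general {G : Type*} [AddCommGroup G] (w : TopologicalSpace G)
    (hT2 : @T2Space G w) (A B : AddSubgroup G) (hprod : IsTopDirectProduct w A B) :
    IsBohrGroup w ↔
      (IsBohrGroup (TopologicalSpace.induced (Subtype.val : A → G) w) ∧
       IsBohrGroup (TopologicalSpace.induced (Subtype.val : B → G) w)) := by
  obtain ⟨e, he⟩ := hprod.exists_addEquiv_induced_eq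
  let _ := w
  rw [← isBohrGroup_induced_addEquiv_iff e, he]
  exact isBohrGroup_prod_iff inferInstance inferInstance

/-- if `(G,w)` is the topological direct product of its subgroups `A` and `B`,
then `(G,w) ∈ 𝓑` iff `(A,w) ∈ 𝓑` and `(B,w) ∈ 𝓑`. -/
theorem stmt7 {G : Type*} [AddCommGroup G] (w : TopologicalSpace G)
    (hgrp : @IsTopologicalAddGroup G w _) (hT2 : @T2Space G w) (htb : TotallyBoundedGroup w)
    (A B : AddSubgroup G) (hprod : IsTopDirectProduct w A B) :
    IsBohrGroup w ↔
      (IsBohrGroup (TopologicalSpace.induced (Subtype.val : A → G) w) ∧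
       IsBohrGroup (TopologicalSpace.induced (Subtype.val : B → G) w)) :=
  stmt7_general w hT2 A B hprod
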